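/- The generating function H_{n,m}(q,x,y,t) := Σ_{s≥0} (Σ_{α ∈ C(s,n), β ∈ C(s,m)} q^{EMD(α,β)} x^{T(α)} y^{T(β)}) t^s satisfies the recursion H_{n,m} = (H_{n-1,m} + H_{n,m-1} − H_{n-1,m-1})/(1 − q^{|n-m|} x^{n-1} y^{m-1} t), with H_{1,1} = 1/(1−t) and H_{0,m} = H_{n,0} = 0. -/

import Mathlib

open MvPolynomial PowerSeries

/-- Coefficient ring `ℤ[q,x,y]`. -/
abbrev R : Type := MvPolynomial (Fin 3) ℤ

/-- The variable `q`. -/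
noncomputable def q : R := MvPolynomial.X 0
/-- The variable `x`. -/
noncomputable def x : R := MvPolynomial.X 1
/-- The variable `y`. -/
noncomputable def y : R := MvPolynomial.X 2

/-- The finset of weak compositions of `s` into `n` parts. -/
def comps (s n : ℕ) : Finset (Fin n → ℕ) :=
  (Fintype.piFinset fun _ : Fin n => Finset.range (s + 1)).filter fun f => ∑ i, f i = s

/-- The word of a composition: the weakly increasing list of its entries' positions. -/
def word {n : ℕ} (α : Fin n → ℕ) : List ℕ :=
  (Finset.univ.sum fun i : Fin n => Multiset.replicate (α i) (i : ℕ)).sort (· ≤ ·)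

/-- The earth mover's distance `EMD(α,β) = ∑_{j=1}^s |w(α)_j − w(β)_j|`
(compositions with different numbers of parts are compared via their words,
shorter ones padded by zeros). -/
def emd (s : ℕ) {n m : ℕ} (α : Fin n → ℕ) (β : Fin m → ℕ) : ℕ :=
  ∑ j ∈ Finset.range s, (((word α).getD j 0 : ℤ) - ((word β).getD j 0 : ℤ)).natAbs

/-- The weighted total `T(α) = ∑ i·a_i`. -/
def wt {n : ℕ} (α : Fin n → ℕ) : ℕ :=
  ∑ i : Fin n, (i : ℕ) * α i

/-- The generating function
`H_{n,m}(q,x,y,t) = ∑_{s≥0} (∑_{α ∈ C(s,n), β ∈ C(s,m)} q^{EMD(α,β)} x^{T(α)} y^{T(β)}) tˢ`,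
with the convention `H_{0,m} = H_{n,0} = 0`. -/
noncomputable def H (n m : ℕ) : PowerSeries R :=
  if n = 0 ∨ m = 0 then 0
  else PowerSeries.mk fun s =>
    ∑ α ∈ comps s n, ∑ β ∈ comps s m,
      q ^ emd s α β * x ^ wt α * y ^ wt β

/-!
Split a composition into `n + 1` parts according to whether its last part is zero. If it is,
drop it; if not, decrease it by one, which deletes the last (and largest) letter `n` of its word.
Doing this to both `α` and `β` is an inclusion–exclusion: the pairs in which `α` or `β` ends in
zero contribute `H_{n,m+1} + H_{n+1,m} - H_{n,m}`, while a pair in which both last parts are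
nonzero comes from a pair of size `s - 1` whose words both gain a last letter, `n` resp. `m`.
That adds `|n - m|` to the EMD, `n` to `T(α)` and `m` to `T(β)`, which is the factor
`q^{|n-m|} xⁿ yᵐ t`.
-/

theorem Multiset.sort_add_singleton_of_forall_le {α : Type*} [LinearOrder α] {s : Multiset α}
    {a : α} (h : ∀ b ∈ s, b ≤ a) : (s + {a}).sort (· ≤ ·) = s.sort (· ≤ ·) ++ [a] := by
  refine List.Perm.eq_of_pairwise' (r := (· ≤ ·)) (Multiset.pairwise_sort _ _) ?_ ?_
  · exact List.pairwise_append.mpr ⟨Multiset.pairwise_sort _ _, List.pairwise_singleton _ _,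
      fun b hb c hc => List.mem_singleton.mp hc ▸ h b ((Multiset.mem_sort _).mp hb)⟩
  · rw [← Multiset.coe_eq_coe, ← Multiset.coe_add, Multiset.sort_eq, Multiset.sort_eq]
    rfl

section Compositions

variable {s n : ℕ}

theorem mem_comps {α : Fin n → ℕ} : α ∈ comps s n ↔ ∑ i, α i = s := by
  refine ⟨fun h => (Finset.mem_filter.mp h).2, fun h => Finset.mem_filter.mpr ⟨?_, h⟩⟩
  refine Fintype.mem_piFinset.mpr fun i => Finset.mem_range_succ_iff.mpr ?_
  exact h ▸ Finset.single_le_sum (fun j _ => Nat.zero_le (α j)) (Finset.mem_univ i)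

theorem comps_zero (n : ℕ) : comps 0 n = {0} := by
  ext α
  simp [mem_comps, Finset.sum_eq_zero_iff, funext_iff]

theorem comps_succ_zero (s : ℕ) : comps (s + 1) 0 = ∅ := by
  ext α
  simp [mem_comps]

theorem snoc_zero_mem_comps {α : Fin n → ℕ} :
    (Fin.snoc α 0 : Fin (n + 1) → ℕ) ∈ comps s (n + 1) ↔ α ∈ comps s n := by
  simp [mem_comps]

theorem add_single_last_mem_comps {α : Fin (n + 1) → ℕ} :
    α + Pi.single (Fin.last n) 1 ∈ comps (s + 1) (n + 1) ↔ α ∈ comps s (n + 1) := by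
  simp [mem_comps, Finset.sum_add_distrib]

theorem sub_add_single_last_cancel {α : Fin (n + 1) → ℕ} (h : α (Fin.last n) ≠ 0) :
    α - Pi.single (Fin.last n) 1 + Pi.single (Fin.last n) 1 = α := by
  ext i
  rcases eq_or_ne i (Fin.last n) with rfl | hi
  · simp only [Pi.add_apply, Pi.sub_apply, Pi.single_eq_same]
    omega
  · simp [hi]

theorem sum_comps_succ_succ {M : Type*} [AddCommMonoid M] (s n : ℕ)
    (F : (Fin (n + 1) → ℕ) → M) :
    ∑ α ∈ comps (s + 1) (n + 1), F α
      = ∑ α ∈ comps (s + 1) n, F (Fin.snoc α 0)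
        + ∑ α ∈ comps s (n + 1), F (α + Pi.single (Fin.last n) 1) := by
  rw [← Finset.sum_filter_add_sum_filter_not _ (fun α => α (Fin.last n) = 0)]
  congr 1
  · symm
    refine Finset.sum_nbij' (fun α => Fin.snoc α 0) Fin.init ?_ ?_ ?_ ?_ ?_
    · intro α hα
      simpa [snoc_zero_mem_comps] using hα
    · intro α hα
      obtain ⟨hα, hlast⟩ := Finset.mem_filter.mp hα
      rw [← Fin.snoc_init_self α, hlast, snoc_zero_mem_comps] at hα
      exact hα
    · intro α _
      exact Fin.init_snoc _ _
    · intro α hα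
      rw [← (Finset.mem_filter.mp hα).2]
      exact Fin.snoc_init_self α
    · intro α _
      rfl
  · symm
    refine Finset.sum_nbij' (fun α => α + Pi.single (Fin.last n) 1)
      (fun α => α - Pi.single (Fin.last n) 1) ?_ ?_ ?_ ?_ ?_
    · intro α hα
      simpa [add_single_last_mem_comps] using hα
    · intro α hα
      obtain ⟨hα, hlast⟩ := Finset.mem_filter.mp hα
      rwa [← add_single_last_mem_comps, sub_add_single_last_cancel hlast]
    · intro α _
      simp
    · intro α hα
      exact sub_add_single_last_cancel (Finset.mem_filter.mp hα).2
    · intro α _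
      rfl

end Compositions

section Words

variable {s n : ℕ}

theorem coe_word (α : Fin n → ℕ) :
    (word α : Multiset ℕ) = ∑ i, Multiset.replicate (α i) (i : ℕ) :=
  Multiset.sort_eq _ _

theorem length_word (α : Fin n → ℕ) : (word α).length = ∑ i, α i := by
  rw [← Multiset.coe_card, coe_word, Multiset.card_sum]
  simp

theorem length_word_of_mem_comps {α : Fin n → ℕ} (hα : α ∈ comps s n) : (word α).length = s := by
  rw [length_word, mem_comps.mp hα]

theorem le_of_mem_word {α : Fin (n + 1) → ℕ} {b : ℕ} (hb : b ∈ word α) : b ≤ n := by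
  rw [← Multiset.mem_coe, coe_word, Multiset.mem_sum] at hb
  obtain ⟨i, -, hi⟩ := hb
  exact Multiset.eq_of_mem_replicate hi ▸ Fin.is_le i

theorem word_snoc_zero (α : Fin n → ℕ) : word (Fin.snoc α 0 : Fin (n + 1) → ℕ) = word α := by
  simp [word, Fin.sum_univ_castSucc]

/-- `n` is the largest letter, so appending it keeps the word sorted. -/
theorem word_add_single_last (α : Fin (n + 1) → ℕ) :
    word (α + Pi.single (Fin.last n) 1) = word α ++ [n] := by
  have hsum : ∑ i, Multiset.replicate ((α + Pi.single (Fin.last n) 1 : Fin (n + 1) → ℕ) i) (i : ℕ)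
      = (∑ i, Multiset.replicate (α i) (i : ℕ)) + {n} := by
    simp only [Pi.add_apply, Multiset.replicate_add, Finset.sum_add_distrib]
    simp [Fin.sum_univ_castSucc, Fin.castSucc_ne_last]
  unfold word
  rw [hsum, Multiset.sort_add_singleton_of_forall_le]
  intro b hb
  rw [← coe_word, Multiset.mem_coe] at hb
  exact le_of_mem_word hb

theorem wt_snoc_zero (α : Fin n → ℕ) : wt (Fin.snoc α 0 : Fin (n + 1) → ℕ) = wt α := by
  simp [wt, Fin.sum_univ_castSucc]

theorem wt_add_single_last (α : Fin (n + 1) → ℕ) :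
    wt (α + Pi.single (Fin.last n) 1) = wt α + n := by
  simp [wt, mul_add, Finset.sum_add_distrib, Pi.single_apply]

end Words

section Weights

variable {s n m : ℕ}

theorem emd_snoc_zero_left (α : Fin n → ℕ) (β : Fin m → ℕ) :
    emd s (Fin.snoc α 0 : Fin (n + 1) → ℕ) β = emd s α β := by
  rw [emd, emd, word_snoc_zero]

theorem emd_snoc_zero_right (α : Fin n → ℕ) (β : Fin m → ℕ) :
    emd s α (Fin.snoc β 0 : Fin (m + 1) → ℕ) = emd s α β := by
  rw [emd, emd, word_snoc_zero]

theorem emd_add_single_last {α : Fin (n + 1) → ℕ} {β : Fin (m + 1) → ℕ}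
    (hα : (word α).length = s) (hβ : (word β).length = s) :
    emd (s + 1) (α + Pi.single (Fin.last n) 1) (β + Pi.single (Fin.last m) 1)
      = emd s α β + ((n : ℤ) - m).natAbs := by
  rw [emd, emd, word_add_single_last, word_add_single_last, Finset.sum_range_succ,
    List.getD_append_right _ _ _ _ hα.le, List.getD_append_right _ _ _ _ hβ.le, hα, hβ,
    Nat.sub_self, List.getD_cons_zero, List.getD_cons_zero]
  congr 1
  refine Finset.sum_congr rfl fun j hj => ?_
  have hj : j < s := Finset.mem_range.mp hj
  rw [List.getD_append _ _ _ _ (hα ▸ hj), List.getD_append _ _ _ _ (hβ ▸ hj)]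

noncomputable def weight (s : ℕ) (α : Fin n → ℕ) (β : Fin m → ℕ) : R :=
  q ^ emd s α β * x ^ wt α * y ^ wt β

theorem weight_snoc_zero_left (α : Fin n → ℕ) (β : Fin m → ℕ) :
    weight s (Fin.snoc α 0 : Fin (n + 1) → ℕ) β = weight s α β := by
  rw [weight, weight, emd_snoc_zero_left, wt_snoc_zero]

theorem weight_snoc_zero_right (α : Fin n → ℕ) (β : Fin m → ℕ) :
    weight s α (Fin.snoc β 0 : Fin (m + 1) → ℕ) = weight s α β := by
  rw [weight, weight, emd_snoc_zero_right, wt_snoc_zero]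

theorem weight_add_single_last {α : Fin (n + 1) → ℕ} {β : Fin (m + 1) → ℕ}
    (hα : α ∈ comps s (n + 1)) (hβ : β ∈ comps s (m + 1)) :
    weight (s + 1) (α + Pi.single (Fin.last n) 1) (β + Pi.single (Fin.last m) 1)
      = q ^ ((n : ℤ) - m).natAbs * x ^ n * y ^ m * weight s α β := by
  rw [weight, weight, emd_add_single_last (length_word_of_mem_comps hα)
    (length_word_of_mem_comps hβ), wt_add_single_last, wt_add_single_last]
  ring

end Weights

noncomputable def hCoeff (n m s : ℕ) : R :=
  ∑ α ∈ comps s n, ∑ β ∈ comps s m, weight s α β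

theorem hCoeff_zero (n m : ℕ) : hCoeff n m 0 = 1 := by
  simp [hCoeff, comps_zero, weight, emd, wt]

theorem hCoeff_zero_left_succ (m s : ℕ) : hCoeff 0 m (s + 1) = 0 := by
  simp [hCoeff, comps_succ_zero]

theorem hCoeff_zero_right_succ (n s : ℕ) : hCoeff n 0 (s + 1) = 0 := by
  simp [hCoeff, comps_succ_zero]

theorem hCoeff_succ_left (n m s : ℕ) :
    hCoeff (n + 1) m (s + 1) = hCoeff n m (s + 1)
      + ∑ α ∈ comps s (n + 1), ∑ β ∈ comps (s + 1) m,
          weight (s + 1) (α + Pi.single (Fin.last n) 1) β := by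
  simp only [hCoeff, sum_comps_succ_succ s n, weight_snoc_zero_left]

theorem hCoeff_succ_succ (n m s : ℕ) :
    hCoeff (n + 1) (m + 1) (s + 1) = hCoeff n (m + 1) (s + 1)
      + ∑ α ∈ comps s (n + 1), ∑ β ∈ comps (s + 1) m,
          weight (s + 1) (α + Pi.single (Fin.last n) 1) β
      + q ^ ((n : ℤ) - m).natAbs * x ^ n * y ^ m * hCoeff (n + 1) (m + 1) s := by
  simp only [hCoeff, sum_comps_succ_succ s n, weight_snoc_zero_left, sum_comps_succ_succ s m,
    weight_snoc_zero_right, Finset.sum_add_distrib, Finset.mul_sum, add_assoc, add_right_inj]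
  refine Finset.sum_congr rfl fun α hα => Finset.sum_congr rfl fun β hβ => ?_
  exact weight_add_single_last hα hβ

theorem hCoeff_recursion (n m s : ℕ) :
    hCoeff (n + 1) (m + 1) (s + 1) + hCoeff n m (s + 1)
      = hCoeff n (m + 1) (s + 1) + hCoeff (n + 1) m (s + 1)
        + q ^ ((n : ℤ) - m).natAbs * x ^ n * y ^ m * hCoeff (n + 1) (m + 1) s := by
  linear_combination hCoeff_succ_succ n m s - hCoeff_succ_left n m s

/-- `H` without its convention `H_{0,m} = H_{n,0} = 0`: the empty composition makes
`hSeries 0 m = hSeries n 0 = 1`. -/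
noncomputable def hSeries (n m : ℕ) : PowerSeries R :=
  PowerSeries.mk (hCoeff n m)

theorem H_eq_hSeries {n m : ℕ} (hn : n ≠ 0) (hm : m ≠ 0) : H n m = hSeries n m :=
  if_neg (not_or.mpr ⟨hn, hm⟩)

theorem H_zero_left (m : ℕ) : H 0 m = 0 :=
  if_pos (Or.inl rfl)

theorem H_zero_right (n : ℕ) : H n 0 = 0 :=
  if_pos (Or.inr rfl)

theorem hSeries_zero_left (m : ℕ) : hSeries 0 m = 1 := by
  ext (_ | s) : 1 <;> simp [hSeries, hCoeff_zero, hCoeff_zero_left_succ]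

theorem hSeries_zero_right (n : ℕ) : hSeries n 0 = 1 := by
  ext (_ | s) : 1 <;> simp [hSeries, hCoeff_zero, hCoeff_zero_right_succ]

theorem hSeries_succ_succ_mul (n m : ℕ) :
    hSeries (n + 1) (m + 1)
        * (1 - PowerSeries.C (q ^ ((n : ℤ) - m).natAbs * x ^ n * y ^ m) * PowerSeries.X)
      = hSeries n (m + 1) + hSeries (n + 1) m - hSeries n m := by
  ext (_ | s) : 1
  · simp [hSeries, hCoeff_zero]
  · simp only [hSeries, mul_sub, mul_one, map_sub, map_add, PowerSeries.coeff_mk,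
      ← mul_assoc, PowerSeries.coeff_succ_mul_X, mul_comm _ (PowerSeries.C _),
      PowerSeries.coeff_C_mul]
    linear_combination hCoeff_recursion n m s

/-- The recursion
`H_{n,m} · (1 − q^{|n−m|} x^{n-1} y^{m-1} t) = H_{n-1,m} + H_{n,m-1} − H_{n-1,m-1}`
(for `n, m ≥ 1` not both equal to 1), together with the base cases
`H_{1,1} = 1/(1−t)` and `H_{0,m} = H_{n,0} = 0`. -/
theorem H_recursion (n m : ℕ) :
    (1 ≤ n → 1 ≤ m → 3 ≤ n + m →
      H n m * (1 - PowerSeries.C (R := _root_.R) (q ^ ((n : ℤ) - m).natAbs * x ^ (n - 1) * y ^ (m - 1))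
          * PowerSeries.X)
        = H (n - 1) m + H n (m - 1) - H (n - 1) (m - 1)) ∧
    H 1 1 * (1 - PowerSeries.X) = 1 ∧
    H 0 m = 0 ∧ H n 0 = 0 := by
  refine ⟨fun hn hm hnm => ?_, ?_, H_zero_left m, H_zero_right n⟩
  · obtain ⟨n, rfl⟩ := Nat.exists_eq_add_of_le' hn
    obtain ⟨m, rfl⟩ := Nat.exists_eq_add_of_le' hm
    have hcast : ((n + 1 : ℕ) : ℤ) - (m + 1 : ℕ) = n - m := by push_cast; ring
    simp only [Nat.add_sub_cancel, hcast, H_eq_hSeries n.succ_ne_zero m.succ_ne_zero,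
      hSeries_succ_succ_mul]
    rcases n with _ | n <;> rcases m with _ | m
    · omega
    · simp [H_zero_left, hSeries_zero_left, H_eq_hSeries]
    · simp [H_zero_right, hSeries_zero_right, H_eq_hSeries]
    · simp [H_eq_hSeries]
  · simpa [H_eq_hSeries, hSeries_zero_left, hSeries_zero_right] using hSeries_succ_succ_mul 0 0
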